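/- Let I ⊆ ℝ be an open interval, ρ : I → ℝ smooth with ρ and ρ' nowhere zero on I, and ζ : I → ℝ smooth with ζ'(t) = 2(ρ(t)³ − 1)/ρ(t)³. Let w : ℝ² → ℝ be a smooth solution of the reduced equation, and let c₁,…,c₅ ∈ ℝ with c₁c₄ − c₂c₃ = Δ ∈ {1,−1}. On the open set D := {(t,x,y) ∈ I × ℝ² : c₃ζ(t) + c₄ ≠ 0}, writing z₁ := ζ(t) and z₂ := y/ρ(t) − x, the function u := Δ(c₃z₁+c₄)·w((c₁z₁+c₂)/(c₃z₁+c₄), (z₂+c₅z₁)/(c₃z₁+c₄)) + c₃z₂³/(6(c₃z₁+c₄)) − c₄c₅z₂²/(2(c₃z₁+c₄)) − (ρ'(t)/(6ρ(t)))·y³ is a smooth solution of the dispersionless Nyzhnyk equation on D. -/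

import Mathlib

/-!
Writing `h := ∂₂²w`, the reduced equation is the inviscid Burgers equation `∂₁h + h ∂₂h = 0`.
Burgers' equation has the hidden symmetry
`h ↦ (Δ h(z̃₁, z̃₂) + c₃z₂ - c₄c₅) / (c₃z₁ + c₄)`, where
`(z̃₁, z̃₂) = ((c₁z₁ + c₂) / (c₃z₁ + c₄), (z₂ + c₅z₁) / (c₃z₁ + c₄))`: it multiplies the Burgers
expression by `Δ² / (c₃z₁ + c₄)³`. The transformed `h` is `∂₂²G`, where `G(z₁, z₂)` is the sum
of the first three terms of `u`, so `G` solves the reduced equation again.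

For any `G`, the function `u = G(ζ t, y / ρ t - x) - ρ' y³ / (6ρ)` has `u_xx = H`, `u_xy = -H / ρ`
and `u_yy = H / ρ² - ρ' y / ρ`, where `H = ∂₂²G`. Using `ζ' = 2(ρ³ - 1) / ρ³`, the difference of
the two sides of the Nyzhnyk equation becomes `-(ζ' / ρ)(∂₁H + H ∂₂H)`.
-/

/-- First-coordinate partial derivative of a function on `ℝ²`. -/
noncomputable def d1 (f : ℝ × ℝ → ℝ) (p : ℝ × ℝ) : ℝ := deriv (fun s => f (s, p.2)) p.1

/-- Second-coordinate partial derivative of a function on `ℝ²`. -/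
noncomputable def d2 (f : ℝ × ℝ → ℝ) (p : ℝ × ℝ) : ℝ := deriv (fun s => f (p.1, s)) p.2

/-- `w` is a smooth solution of the reduced equation `∂₁∂₂²w + (∂₂²w)·(∂₂³w) = 0` on `U`. -/
def IsRedSolOn (w : ℝ × ℝ → ℝ) (U : Set (ℝ × ℝ)) : Prop :=
  ContDiffOn ℝ (⊤ : ℕ∞) w U ∧
    ∀ p ∈ U, d1 (d2 (d2 w)) p + d2 (d2 w) p * d2 (d2 (d2 w)) p = 0

/-- `h` is a smooth solution of the inviscid Burgers equation `∂₁h + h·∂₂h = 0` on `U`. -/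
def IsBurgersSolOn (h : ℝ × ℝ → ℝ) (U : Set (ℝ × ℝ)) : Prop :=
  ContDiffOn ℝ (⊤ : ℕ∞) h U ∧ ∀ p ∈ U, d1 h p + h p * d2 h p = 0

/-- Partial derivative with respect to `t` of a function on `ℝ³ = ℝ_t × ℝ_x × ℝ_y`. -/
noncomputable def Dt (f : ℝ × ℝ × ℝ → ℝ) (p : ℝ × ℝ × ℝ) : ℝ :=
  deriv (fun s => f (s, p.2.1, p.2.2)) p.1

/-- Partial derivative with respect to `x`. -/
noncomputable def Dx (f : ℝ × ℝ × ℝ → ℝ) (p : ℝ × ℝ × ℝ) : ℝ :=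
  deriv (fun s => f (p.1, s, p.2.2)) p.2.1

/-- Partial derivative with respect to `y`. -/
noncomputable def Dy (f : ℝ × ℝ × ℝ → ℝ) (p : ℝ × ℝ × ℝ) : ℝ :=
  deriv (fun s => f (p.1, p.2.1, s)) p.2.2

/-- `u` is a smooth solution of the dispersionless Nyzhnyk equation
`u_txy = (u_xx·u_xy)_x + (u_xy·u_yy)_y` on `D`. -/
def IsDNSolOn (u : ℝ × ℝ × ℝ → ℝ) (D : Set (ℝ × ℝ × ℝ)) : Prop :=
  ContDiffOn ℝ (⊤ : ℕ∞) u D ∧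
    ∀ p ∈ D, Dt (Dx (Dy u)) p =
      Dx (fun q => Dx (Dx u) q * Dx (Dy u) q) p +
        Dy (fun q => Dx (Dy u) q * Dy (Dy u) q) p

open Set Filter Topology

section PartialDerivatives

variable {f g : ℝ × ℝ → ℝ}

theorem d1_eq_fderiv {p : ℝ × ℝ} (hf : DifferentiableAt ℝ f p) :
    d1 f p = fderiv ℝ f p (1, 0) :=
  (hf.hasFDerivAt.comp_hasDerivAt p.1
    ((hasDerivAt_id p.1).prodMk (hasDerivAt_const p.1 p.2))).deriv

theorem d2_eq_fderiv {p : ℝ × ℝ} (hf : DifferentiableAt ℝ f p) :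
    d2 f p = fderiv ℝ f p (0, 1) :=
  (hf.hasFDerivAt.comp_hasDerivAt p.2
    ((hasDerivAt_const p.2 p.1).prodMk (hasDerivAt_id p.2))).deriv

theorem DifferentiableAt.hasDerivAt_comp_prodMk {α β : ℝ → ℝ} {a b s : ℝ}
    (hf : DifferentiableAt ℝ f (α s, β s)) (hα : HasDerivAt α a s) (hβ : HasDerivAt β b s) :
    HasDerivAt (fun r => f (α r, β r)) (a * d1 f (α s, β s) + b * d2 f (α s, β s)) s := by
  refine (hf.hasFDerivAt.comp_hasDerivAt s (hα.prodMk hβ)).congr_deriv ?_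
  have hab : ((a, b) : ℝ × ℝ) = a • ((1 : ℝ), (0 : ℝ)) + b • ((0 : ℝ), (1 : ℝ)) := by
    simp
  rw [d1_eq_fderiv hf, d2_eq_fderiv hf, hab, map_add, map_smul, map_smul, smul_eq_mul,
    smul_eq_mul]

theorem Filter.EventuallyEq.d1_eq {p : ℝ × ℝ} (h : f =ᶠ[𝓝 p] g) : d1 f p = d1 g p :=
  (h.comp_tendsto ((continuous_id.prodMk continuous_const).tendsto' p.1 p rfl)).deriv_eq

theorem Filter.EventuallyEq.d2_eq {p : ℝ × ℝ} (h : f =ᶠ[𝓝 p] g) : d2 f p = d2 g p :=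
  (h.comp_tendsto ((continuous_const.prodMk continuous_id).tendsto' p.2 p rfl)).deriv_eq

theorem ContDiffOn.d2 {m n : WithTop ℕ∞} {U : Set (ℝ × ℝ)} (hf : ContDiffOn ℝ n f U)
    (hU : IsOpen U) (hmn : m + 1 ≤ n) : ContDiffOn ℝ m (d2 f) U := by
  refine ((hf.fderiv_of_isOpen hU hmn).clm_apply
    (contDiffOn_const (c := ((0 : ℝ), (1 : ℝ))))).congr fun p hp => ?_
  have hn : n ≠ 0 := (one_pos.trans_le (le_add_self.trans hmn)).ne'
  exact d2_eq_fderiv ((hf.differentiableOn hn).differentiableAt (hU.mem_nhds hp))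

theorem ContDiffOn.differentiableAt_prod_univ {n : WithTop ℕ∞} {S : Set ℝ}
    (hf : ContDiffOn ℝ n f (S ×ˢ univ)) (hn : n ≠ 0) (hS : IsOpen S) {s : ℝ} (hs : s ∈ S)
    (z : ℝ) : DifferentiableAt ℝ f (s, z) :=
  (hf.differentiableOn hn).differentiableAt ((hS.prod isOpen_univ).mem_nhds ⟨hs, trivial⟩)

end PartialDerivatives

section HiddenSymmetry

variable (c₁ c₂ c₃ c₄ c₅ : ℝ)

noncomputable def moebiusMap (p : ℝ × ℝ) : ℝ × ℝ :=
  ((c₁ * p.1 + c₂) / (c₃ * p.1 + c₄), (p.2 + c₅ * p.1) / (c₃ * p.1 + c₄))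

noncomputable def burgersTransform (h : ℝ × ℝ → ℝ) (p : ℝ × ℝ) : ℝ :=
  ((c₁ * c₄ - c₂ * c₃) * h (moebiusMap c₁ c₂ c₃ c₄ c₅ p) + c₃ * p.2 - c₄ * c₅) /
    (c₃ * p.1 + c₄)

noncomputable def redTransform (w : ℝ × ℝ → ℝ) (p : ℝ × ℝ) : ℝ :=
  (c₁ * c₄ - c₂ * c₃) * (c₃ * p.1 + c₄) * w (moebiusMap c₁ c₂ c₃ c₄ c₅ p)
    + c₃ * p.2 ^ 3 / (6 * (c₃ * p.1 + c₄)) - c₄ * c₅ * p.2 ^ 2 / (2 * (c₃ * p.1 + c₄))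

variable {c₁ c₂ c₃ c₄ c₅} {f h w : ℝ × ℝ → ℝ} {s z : ℝ}

theorem DifferentiableAt.hasDerivAt_comp_moebiusMap_fst (hA : c₃ * s + c₄ ≠ 0)
    (hf : DifferentiableAt ℝ f (moebiusMap c₁ c₂ c₃ c₄ c₅ (s, z))) :
    HasDerivAt (fun r => f (moebiusMap c₁ c₂ c₃ c₄ c₅ (r, z)))
      (((c₁ * c₄ - c₂ * c₃) * d1 f (moebiusMap c₁ c₂ c₃ c₄ c₅ (s, z)) +
        (c₄ * c₅ - c₃ * z) * d2 f (moebiusMap c₁ c₂ c₃ c₄ c₅ (s, z))) / (c₃ * s + c₄) ^ 2) s := by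
  have hA' : HasDerivAt (fun r => c₃ * r + c₄) c₃ s := by
    simpa using ((hasDerivAt_id' s).const_mul c₃).add_const c₄
  refine (hf.hasDerivAt_comp_prodMk (α := fun r => (c₁ * r + c₂) / (c₃ * r + c₄))
    (β := fun r => (z + c₅ * r) / (c₃ * r + c₄))
    ((((hasDerivAt_id' s).const_mul c₁).add_const c₂).div hA' hA)
    (((hasDerivAt_id' s).const_mul c₅).const_add z |>.div hA' hA)).congr_deriv ?_
  simp only [moebiusMap]
  field_simp
  ring

theorem DifferentiableAt.hasDerivAt_comp_moebiusMap_snd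
    (hf : DifferentiableAt ℝ f (moebiusMap c₁ c₂ c₃ c₄ c₅ (s, z))) :
    HasDerivAt (fun r => f (moebiusMap c₁ c₂ c₃ c₄ c₅ (s, r)))
      (d2 f (moebiusMap c₁ c₂ c₃ c₄ c₅ (s, z)) / (c₃ * s + c₄)) z := by
  refine (hf.hasDerivAt_comp_prodMk (β := fun r => (r + c₅ * s) / (c₃ * s + c₄))
    (hasDerivAt_const z _)
    (((hasDerivAt_id' z).add_const _).div_const _)).congr_deriv ?_
  simp only [moebiusMap]
  ring

theorem isBurgersSolOn_burgersTransform (hh : IsBurgersSolOn h univ) :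
    IsBurgersSolOn (burgersTransform c₁ c₂ c₃ c₄ c₅ h) ({s | c₃ * s + c₄ ≠ 0} ×ˢ univ) := by
  have hsmooth : ContDiff ℝ (⊤ : ℕ∞) h := contDiffOn_univ.mp hh.1
  refine ⟨?_, ?_⟩
  · have hA : ∀ p ∈ {s | c₃ * s + c₄ ≠ 0} ×ˢ (univ : Set ℝ), c₃ * p.1 + c₄ ≠ 0 :=
      fun p hp => hp.1
    unfold burgersTransform moebiusMap
    fun_prop (disch := assumption)
  · rintro ⟨s, z⟩ ⟨hA, -⟩
    have hdiff : DifferentiableAt ℝ h (moebiusMap c₁ c₂ c₃ c₄ c₅ (s, z)) :=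
      hsmooth.differentiable (by simp) _
    have hA' : HasDerivAt (fun r => c₃ * r + c₄) c₃ s := by
      simpa using ((hasDerivAt_id' s).const_mul c₃).add_const c₄
    have hd1 : HasDerivAt (fun r => burgersTransform c₁ c₂ c₃ c₄ c₅ h (r, z)) _ s :=
      ((((hdiff.hasDerivAt_comp_moebiusMap_fst hA).const_mul (c₁ * c₄ - c₂ * c₃)).add_const
        (c₃ * z)).sub_const (c₄ * c₅)).div hA' hA
    have hd2 : HasDerivAt (fun r => burgersTransform c₁ c₂ c₃ c₄ c₅ h (s, r)) _ z :=
      ((((hdiff.hasDerivAt_comp_moebiusMap_snd).const_mul (c₁ * c₄ - c₂ * c₃)).add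
        ((hasDerivAt_id' z).const_mul c₃)).sub_const (c₄ * c₅)).div_const (c₃ * s + c₄)
    have hburgers := hh.2 _ (mem_univ (moebiusMap c₁ c₂ c₃ c₄ c₅ (s, z)))
    rw [show d1 _ (s, z) = _ from hd1.deriv, show d2 _ (s, z) = _ from hd2.deriv,
      burgersTransform, eq_neg_of_add_eq_zero_left hburgers]
    field_simp
    ring

theorem d2_redTransform (hA : c₃ * s + c₄ ≠ 0)
    (hw : DifferentiableAt ℝ w (moebiusMap c₁ c₂ c₃ c₄ c₅ (s, z))) :
    d2 (redTransform c₁ c₂ c₃ c₄ c₅ w) (s, z) =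
      (c₁ * c₄ - c₂ * c₃) * d2 w (moebiusMap c₁ c₂ c₃ c₄ c₅ (s, z))
        + c₃ * z ^ 2 / (2 * (c₃ * s + c₄)) - c₄ * c₅ * z / (c₃ * s + c₄) := by
  have hd : HasDerivAt (fun r => redTransform c₁ c₂ c₃ c₄ c₅ w (s, r)) _ z :=
    ((hw.hasDerivAt_comp_moebiusMap_snd.const_mul ((c₁ * c₄ - c₂ * c₃) * (c₃ * s + c₄))).add
      (((hasDerivAt_pow 3 z).const_mul c₃).div_const (6 * (c₃ * s + c₄)))).sub
      (((hasDerivAt_pow 2 z).const_mul (c₄ * c₅)).div_const (2 * (c₃ * s + c₄)))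
  rw [show d2 _ (s, z) = _ from hd.deriv]
  field_simp
  ring

theorem d2_d2_redTransform (hA : c₃ * s + c₄ ≠ 0) (hw : Differentiable ℝ w)
    (hw' : DifferentiableAt ℝ (d2 w) (moebiusMap c₁ c₂ c₃ c₄ c₅ (s, z))) :
    d2 (d2 (redTransform c₁ c₂ c₃ c₄ c₅ w)) (s, z) =
      burgersTransform c₁ c₂ c₃ c₄ c₅ (d2 (d2 w)) (s, z) := by
  have hd : HasDerivAt (fun r => (c₁ * c₄ - c₂ * c₃) * d2 w (moebiusMap c₁ c₂ c₃ c₄ c₅ (s, r))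
      + c₃ * r ^ 2 / (2 * (c₃ * s + c₄)) - c₄ * c₅ * r / (c₃ * s + c₄)) _ z :=
    ((hw'.hasDerivAt_comp_moebiusMap_snd.const_mul _).add
      (((hasDerivAt_pow 2 z).const_mul c₃).div_const _)).sub
      (((hasDerivAt_id' z).const_mul (c₄ * c₅)).div_const _)
  have hslice : (fun r => d2 (redTransform c₁ c₂ c₃ c₄ c₅ w) (s, r)) = fun r =>
      (c₁ * c₄ - c₂ * c₃) * d2 w (moebiusMap c₁ c₂ c₃ c₄ c₅ (s, r))
        + c₃ * r ^ 2 / (2 * (c₃ * s + c₄)) - c₄ * c₅ * r / (c₃ * s + c₄) :=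
    funext fun r => d2_redTransform hA (hw _)
  rw [d2, hslice, hd.deriv, burgersTransform]
  field_simp
  ring

theorem isRedSolOn_redTransform (hw : IsRedSolOn w univ) :
    IsRedSolOn (redTransform c₁ c₂ c₃ c₄ c₅ w) ({s | c₃ * s + c₄ ≠ 0} ×ˢ univ) := by
  have hU : IsOpen ({s | c₃ * s + c₄ ≠ 0} ×ˢ (univ : Set ℝ)) :=
    (isOpen_ne_fun (by fun_prop) continuous_const).prod isOpen_univ
  have hsmooth : ContDiff ℝ (⊤ : ℕ∞) w := contDiffOn_univ.mp hw.1
  have hsmooth' : ContDiff ℝ (⊤ : ℕ∞) (d2 w) :=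
    contDiffOn_univ.mp (hw.1.d2 isOpen_univ (by norm_num))
  have hburgers : IsBurgersSolOn (d2 (d2 w)) univ := ⟨hsmooth'.contDiffOn.d2 isOpen_univ
    (by norm_num), hw.2⟩
  refine ⟨?_, fun p hp => ?_⟩
  · unfold redTransform moebiusMap
    fun_prop (disch := intro p hp; simp_all)
  · have heq : d2 (d2 (redTransform c₁ c₂ c₃ c₄ c₅ w)) =ᶠ[𝓝 p]
        burgersTransform c₁ c₂ c₃ c₄ c₅ (d2 (d2 w)) :=
      eventuallyEq_of_mem (hU.mem_nhds hp) fun q hq =>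
        d2_d2_redTransform hq.1 (hsmooth.differentiable (by simp))
          (hsmooth'.differentiable (by simp) _)
    rw [heq.d1_eq, heq.d2_eq, heq.eq_of_nhds]
    exact (isBurgersSolOn_burgersTransform hburgers).2 p hp

end HiddenSymmetry

section NyzhnykAnsatz

noncomputable def invariantVars (ρ ζ : ℝ → ℝ) (p : ℝ × ℝ × ℝ) : ℝ × ℝ :=
  (ζ p.1, p.2.2 / ρ p.1 - p.2.1)

noncomputable def nyzhnykAnsatz (ρ ζ : ℝ → ℝ) (G : ℝ × ℝ → ℝ) (p : ℝ × ℝ × ℝ) : ℝ :=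
  G (invariantVars ρ ζ p) - deriv ρ p.1 / (6 * ρ p.1) * p.2.2 ^ 3

variable {ρ ζ : ℝ → ℝ} {g G : ℝ × ℝ → ℝ} {t x y : ℝ} {T S : Set ℝ}

theorem DifferentiableAt.hasDerivAt_comp_invariantVars_x
    (hg : DifferentiableAt ℝ g (invariantVars ρ ζ (t, x, y))) :
    HasDerivAt (fun s => g (invariantVars ρ ζ (t, s, y)))
      (-d2 g (invariantVars ρ ζ (t, x, y))) x :=
  (hg.hasDerivAt_comp_prodMk (α := fun _ => ζ t) (β := fun s => y / ρ t - s)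
    (hasDerivAt_const x _) ((hasDerivAt_id' x).const_sub _)).congr_deriv
    (by simp only [invariantVars]; ring)

theorem DifferentiableAt.hasDerivAt_comp_invariantVars_y
    (hg : DifferentiableAt ℝ g (invariantVars ρ ζ (t, x, y))) :
    HasDerivAt (fun s => g (invariantVars ρ ζ (t, x, s)))
      (d2 g (invariantVars ρ ζ (t, x, y)) / ρ t) y :=
  (hg.hasDerivAt_comp_prodMk (α := fun _ => ζ t) (β := fun s => s / ρ t - x)
    (hasDerivAt_const y _) (((hasDerivAt_id' y).div_const _).sub_const _)).congr_deriv
    (by simp only [invariantVars]; ring)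

theorem DifferentiableAt.hasDerivAt_comp_invariantVars_t {ζ' : ℝ}
    (hg : DifferentiableAt ℝ g (invariantVars ρ ζ (t, x, y))) (hρ : DifferentiableAt ℝ ρ t)
    (hr : ρ t ≠ 0) (hζ : HasDerivAt ζ ζ' t) :
    HasDerivAt (fun s => g (invariantVars ρ ζ (s, x, y)))
      (ζ' * d1 g (invariantVars ρ ζ (t, x, y)) -
        y * deriv ρ t / ρ t ^ 2 * d2 g (invariantVars ρ ζ (t, x, y))) t :=
  (hg.hasDerivAt_comp_prodMk (α := ζ) (β := fun s => y / ρ s - x) hζ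
    (((hasDerivAt_const t y).div hρ.hasDerivAt hr).sub_const _)).congr_deriv
    (by simp only [invariantVars]; ring)

theorem dx_nyzhnykAnsatz (hG : DifferentiableAt ℝ G (invariantVars ρ ζ (t, x, y))) :
    Dx (nyzhnykAnsatz ρ ζ G) (t, x, y) = -d2 G (invariantVars ρ ζ (t, x, y)) := by
  have hd : HasDerivAt (fun s => nyzhnykAnsatz ρ ζ G (t, s, y)) _ x :=
    hG.hasDerivAt_comp_invariantVars_x.sub_const (deriv ρ t / (6 * ρ t) * y ^ 3)
  exact hd.deriv

theorem dy_nyzhnykAnsatz (hG : DifferentiableAt ℝ G (invariantVars ρ ζ (t, x, y))) :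
    Dy (nyzhnykAnsatz ρ ζ G) (t, x, y) =
      d2 G (invariantVars ρ ζ (t, x, y)) / ρ t - deriv ρ t / (2 * ρ t) * y ^ 2 := by
  have hd : HasDerivAt (fun s => nyzhnykAnsatz ρ ζ G (t, x, s)) _ y :=
    hG.hasDerivAt_comp_invariantVars_y.sub
      ((hasDerivAt_pow 3 y).const_mul (deriv ρ t / (6 * ρ t)))
  exact hd.deriv.trans (by ring)

theorem dx_dx_nyzhnykAnsatz (hG : ∀ z, DifferentiableAt ℝ G (ζ t, z))
    (hG' : DifferentiableAt ℝ (d2 G) (invariantVars ρ ζ (t, x, y))) :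
    Dx (Dx (nyzhnykAnsatz ρ ζ G)) (t, x, y) = d2 (d2 G) (invariantVars ρ ζ (t, x, y)) := by
  have hslice : (fun s => Dx (nyzhnykAnsatz ρ ζ G) (t, s, y)) =
      fun s => -d2 G (invariantVars ρ ζ (t, s, y)) :=
    funext fun s => dx_nyzhnykAnsatz (hG _)
  rw [Dx, hslice]
  exact hG'.hasDerivAt_comp_invariantVars_x.neg.deriv.trans (neg_neg _)

theorem dx_dy_nyzhnykAnsatz (hG : ∀ z, DifferentiableAt ℝ G (ζ t, z))
    (hG' : DifferentiableAt ℝ (d2 G) (invariantVars ρ ζ (t, x, y))) :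
    Dx (Dy (nyzhnykAnsatz ρ ζ G)) (t, x, y) =
      -d2 (d2 G) (invariantVars ρ ζ (t, x, y)) / ρ t := by
  have hslice : (fun s => Dy (nyzhnykAnsatz ρ ζ G) (t, s, y)) = fun s =>
      d2 G (invariantVars ρ ζ (t, s, y)) / ρ t - deriv ρ t / (2 * ρ t) * y ^ 2 :=
    funext fun s => dy_nyzhnykAnsatz (hG _)
  rw [Dx, hslice]
  exact ((hG'.hasDerivAt_comp_invariantVars_x.div_const _).sub_const _).deriv.trans (by ring)

theorem dy_dy_nyzhnykAnsatz (hG : ∀ z, DifferentiableAt ℝ G (ζ t, z))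
    (hG' : DifferentiableAt ℝ (d2 G) (invariantVars ρ ζ (t, x, y))) :
    Dy (Dy (nyzhnykAnsatz ρ ζ G)) (t, x, y) =
      d2 (d2 G) (invariantVars ρ ζ (t, x, y)) / ρ t ^ 2 - deriv ρ t / ρ t * y := by
  have hslice : (fun s => Dy (nyzhnykAnsatz ρ ζ G) (t, x, s)) = fun s =>
      d2 G (invariantVars ρ ζ (t, x, s)) / ρ t - deriv ρ t / (2 * ρ t) * s ^ 2 :=
    funext fun s => dy_nyzhnykAnsatz (hG _)
  rw [Dy, hslice]
  exact ((hG'.hasDerivAt_comp_invariantVars_y.div_const _).sub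
    ((hasDerivAt_pow 2 y).const_mul _)).deriv.trans (by ring)

theorem dt_dx_dy_nyzhnykAnsatz {ζ' : ℝ} (hρ : DifferentiableAt ℝ ρ t) (hr : ρ t ≠ 0)
    (hζ : HasDerivAt ζ ζ' t) (hG : ∀ᶠ s in 𝓝 t, ∀ z, DifferentiableAt ℝ G (ζ s, z))
    (hG' : ∀ᶠ s in 𝓝 t, ∀ z, DifferentiableAt ℝ (d2 G) (ζ s, z))
    (hG'' : DifferentiableAt ℝ (d2 (d2 G)) (invariantVars ρ ζ (t, x, y))) :
    Dt (Dx (Dy (nyzhnykAnsatz ρ ζ G))) (t, x, y) =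
      -(ζ' * d1 (d2 (d2 G)) (invariantVars ρ ζ (t, x, y)) -
          y * deriv ρ t / ρ t ^ 2 * d2 (d2 (d2 G)) (invariantVars ρ ζ (t, x, y))) / ρ t +
        d2 (d2 G) (invariantVars ρ ζ (t, x, y)) * deriv ρ t / ρ t ^ 2 := by
  have hslice : (fun s => Dx (Dy (nyzhnykAnsatz ρ ζ G)) (s, x, y)) =ᶠ[𝓝 t]
      fun s => -d2 (d2 G) (invariantVars ρ ζ (s, x, y)) / ρ s := by
    filter_upwards [hG, hG'] with s hs hs' using dx_dy_nyzhnykAnsatz hs (hs' _)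
  have hd := (hG''.hasDerivAt_comp_invariantVars_t hρ hr hζ).neg.div hρ.hasDerivAt hr
  rw [Dt, hslice.deriv_eq]
  exact hd.deriv.trans (by simp only [Pi.neg_apply]; field_simp; ring)

theorem dx_mul_nyzhnykAnsatz (hG : ∀ z, DifferentiableAt ℝ G (ζ t, z))
    (hG' : ∀ z, DifferentiableAt ℝ (d2 G) (ζ t, z))
    (hG'' : DifferentiableAt ℝ (d2 (d2 G)) (invariantVars ρ ζ (t, x, y))) :
    Dx (fun q => Dx (Dx (nyzhnykAnsatz ρ ζ G)) q * Dx (Dy (nyzhnykAnsatz ρ ζ G)) q) (t, x, y) =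
      2 * d2 (d2 G) (invariantVars ρ ζ (t, x, y)) *
        d2 (d2 (d2 G)) (invariantVars ρ ζ (t, x, y)) / ρ t := by
  have hslice : (fun s => Dx (Dx (nyzhnykAnsatz ρ ζ G)) (t, s, y) *
      Dx (Dy (nyzhnykAnsatz ρ ζ G)) (t, s, y)) = fun s =>
      d2 (d2 G) (invariantVars ρ ζ (t, s, y)) * (-d2 (d2 G) (invariantVars ρ ζ (t, s, y)) / ρ t) :=
    funext fun s => by rw [dx_dx_nyzhnykAnsatz hG (hG' _), dx_dy_nyzhnykAnsatz hG (hG' _)]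
  have hx := hG''.hasDerivAt_comp_invariantVars_x
  rw [Dx, hslice]
  exact (hx.mul (hx.neg.div_const _)).deriv.trans (by simp only [Pi.neg_apply]; ring)

theorem dy_mul_nyzhnykAnsatz (hG : ∀ z, DifferentiableAt ℝ G (ζ t, z))
    (hG' : ∀ z, DifferentiableAt ℝ (d2 G) (ζ t, z))
    (hG'' : DifferentiableAt ℝ (d2 (d2 G)) (invariantVars ρ ζ (t, x, y))) :
    Dy (fun q => Dx (Dy (nyzhnykAnsatz ρ ζ G)) q * Dy (Dy (nyzhnykAnsatz ρ ζ G)) q) (t, x, y) =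
      -2 * d2 (d2 G) (invariantVars ρ ζ (t, x, y)) *
          d2 (d2 (d2 G)) (invariantVars ρ ζ (t, x, y)) / ρ t ^ 4 +
        deriv ρ t * y * d2 (d2 (d2 G)) (invariantVars ρ ζ (t, x, y)) / ρ t ^ 3 +
        deriv ρ t * d2 (d2 G) (invariantVars ρ ζ (t, x, y)) / ρ t ^ 2 := by
  have hslice : (fun s => Dx (Dy (nyzhnykAnsatz ρ ζ G)) (t, x, s) *
      Dy (Dy (nyzhnykAnsatz ρ ζ G)) (t, x, s)) = fun s =>
      -d2 (d2 G) (invariantVars ρ ζ (t, x, s)) / ρ t *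
        (d2 (d2 G) (invariantVars ρ ζ (t, x, s)) / ρ t ^ 2 - deriv ρ t / ρ t * s) :=
    funext fun s => by rw [dx_dy_nyzhnykAnsatz hG (hG' _), dy_dy_nyzhnykAnsatz hG (hG' _)]
  have hy := hG''.hasDerivAt_comp_invariantVars_y
  rw [Dy, hslice]
  exact ((hy.neg.div_const _).mul ((hy.div_const _).sub
    ((hasDerivAt_id' y).const_mul _))).deriv.trans
    (by simp only [Pi.neg_apply, Pi.sub_apply]; ring)

theorem contDiffOn_nyzhnykAnsatz (hT : IsOpen T) (hρ : ContDiffOn ℝ (⊤ : ℕ∞) ρ T)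
    (hρ0 : ∀ t ∈ T, ρ t ≠ 0) (hζ : ContDiffOn ℝ (⊤ : ℕ∞) ζ T) (hζS : MapsTo ζ T S)
    (hG : ContDiffOn ℝ (⊤ : ℕ∞) G (S ×ˢ univ)) :
    ContDiffOn ℝ (⊤ : ℕ∞) (nyzhnykAnsatz ρ ζ G) {p | p.1 ∈ T} := by
  have hT' : MapsTo Prod.fst {p : ℝ × ℝ × ℝ | p.1 ∈ T} T := fun _ hp => hp
  have hρ0' : ∀ p ∈ {p : ℝ × ℝ × ℝ | p.1 ∈ T}, ρ p.1 ≠ 0 := fun p hp => hρ0 p.1 hp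
  have hζ1 : ContDiffOn ℝ (⊤ : ℕ∞) (fun p : ℝ × ℝ × ℝ => ζ p.1) {p | p.1 ∈ T} :=
    hζ.comp contDiffOn_fst hT'
  have hρ1 : ContDiffOn ℝ (⊤ : ℕ∞) (fun p : ℝ × ℝ × ℝ => ρ p.1) {p | p.1 ∈ T} :=
    hρ.comp contDiffOn_fst hT'
  have hρ'1 : ContDiffOn ℝ (⊤ : ℕ∞) (fun p : ℝ × ℝ × ℝ => deriv ρ p.1) {p | p.1 ∈ T} :=
    (hρ.deriv_of_isOpen hT (by norm_num)).comp contDiffOn_fst hT'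
  have hx : ContDiffOn ℝ (⊤ : ℕ∞) (fun p : ℝ × ℝ × ℝ => p.2.1) {p | p.1 ∈ T} := by fun_prop
  have hy : ContDiffOn ℝ (⊤ : ℕ∞) (fun p : ℝ × ℝ × ℝ => p.2.2) {p | p.1 ∈ T} := by fun_prop
  have hvars : ContDiffOn ℝ (⊤ : ℕ∞) (invariantVars ρ ζ) {p | p.1 ∈ T} :=
    hζ1.prodMk ((hy.div hρ1 hρ0').sub hx)
  have hGvars : ContDiffOn ℝ (⊤ : ℕ∞) (fun p => G (invariantVars ρ ζ p)) {p | p.1 ∈ T} :=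
    hG.comp hvars fun p hp => ⟨hζS hp, trivial⟩
  exact hGvars.sub ((hρ'1.div (contDiffOn_const.mul hρ1)
    fun p hp => mul_ne_zero (by norm_num) (hρ0' p hp)).mul (hy.pow 3))

theorem isDNSolOn_nyzhnykAnsatz (hT : IsOpen T) (hS : IsOpen S)
    (hρ : ContDiffOn ℝ (⊤ : ℕ∞) ρ T) (hρ0 : ∀ t ∈ T, ρ t ≠ 0)
    (hζ : ContDiffOn ℝ (⊤ : ℕ∞) ζ T) (hζ' : ∀ t ∈ T, deriv ζ t = 2 * (ρ t ^ 3 - 1) / ρ t ^ 3)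
    (hζS : MapsTo ζ T S) (hG : IsRedSolOn G (S ×ˢ univ)) :
    IsDNSolOn (nyzhnykAnsatz ρ ζ G) {p | p.1 ∈ T} := by
  refine ⟨contDiffOn_nyzhnykAnsatz hT hρ hρ0 hζ hζS hG.1, ?_⟩
  rintro ⟨t, x, y⟩ (ht : t ∈ T)
  have hU : IsOpen (S ×ˢ (univ : Set ℝ)) := hS.prod isOpen_univ
  have hG1 : ContDiffOn ℝ (⊤ : ℕ∞) (d2 G) (S ×ˢ univ) := hG.1.d2 hU (by norm_num)
  have hG2 : ContDiffOn ℝ (⊤ : ℕ∞) (d2 (d2 G)) (S ×ˢ univ) := hG1.d2 hU (by norm_num)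
  have hdiff {g : ℝ × ℝ → ℝ} (hg : ContDiffOn ℝ (⊤ : ℕ∞) g (S ×ˢ univ)) {s : ℝ} (hs : s ∈ T)
      (z : ℝ) : DifferentiableAt ℝ g (ζ s, z) :=
    hg.differentiableAt_prod_univ (by simp) hS (hζS hs) z
  have hnear : ∀ᶠ s in 𝓝 t, s ∈ T := hT.mem_nhds ht
  have hρt : DifferentiableAt ℝ ρ t :=
    (hρ.differentiableOn (by simp)).differentiableAt (hT.mem_nhds ht)
  have hζt : HasDerivAt ζ (2 * (ρ t ^ 3 - 1) / ρ t ^ 3) t :=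
    hζ' t ht ▸ ((hζ.differentiableOn (by simp)).differentiableAt (hT.mem_nhds ht)).hasDerivAt
  have hburgers := hG.2 (invariantVars ρ ζ (t, x, y)) ⟨hζS ht, trivial⟩
  have hr := hρ0 t ht
  rw [dt_dx_dy_nyzhnykAnsatz hρt hr hζt (hnear.mono fun s hs => hdiff hG.1 hs)
      (hnear.mono fun s hs => hdiff hG1 hs) (hdiff hG2 ht _),
    dx_mul_nyzhnykAnsatz (hdiff hG.1 ht) (hdiff hG1 ht) (hdiff hG2 ht _),
    dy_mul_nyzhnykAnsatz (hdiff hG.1 ht) (hdiff hG1 ht) (hdiff hG2 ht _),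
    eq_neg_of_add_eq_zero_left hburgers]
  field_simp
  ring

end NyzhnykAnsatz

theorem statement4_general (I : Set ℝ) (hIopen : IsOpen I)
    (ρ ζ : ℝ → ℝ) (hρ : ContDiffOn ℝ (⊤ : ℕ∞) ρ I) (hρ0 : ∀ t ∈ I, ρ t ≠ 0)
    (hζ : ContDiffOn ℝ (⊤ : ℕ∞) ζ I)
    (hζ' : ∀ t ∈ I, deriv ζ t = 2 * (ρ t ^ 3 - 1) / ρ t ^ 3)
    (w : ℝ × ℝ → ℝ) (hw : ContDiff ℝ (⊤ : ℕ∞) w)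
    (hweq : ∀ p, d1 (d2 (d2 w)) p + d2 (d2 w) p * d2 (d2 (d2 w)) p = 0)
    (c₁ c₂ c₃ c₄ c₅ : ℝ)
    (u : ℝ × ℝ × ℝ → ℝ)
    (hu : ∀ t x y, u (t, x, y) =
      (c₁ * c₄ - c₂ * c₃) * (c₃ * ζ t + c₄) *
          w ((c₁ * ζ t + c₂) / (c₃ * ζ t + c₄),
            ((y / ρ t - x) + c₅ * ζ t) / (c₃ * ζ t + c₄))
        + c₃ * (y / ρ t - x) ^ 3 / (6 * (c₃ * ζ t + c₄))
        - c₄ * c₅ * (y / ρ t - x) ^ 2 / (2 * (c₃ * ζ t + c₄))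
        - deriv ρ t / (6 * ρ t) * y ^ 3) :
    IsDNSolOn u {p : ℝ × ℝ × ℝ | p.1 ∈ I ∧ c₃ * ζ p.1 + c₄ ≠ 0} := by
  have hu' : u = nyzhnykAnsatz ρ ζ (redTransform c₁ c₂ c₃ c₄ c₅ w) :=
    funext fun ⟨t, x, y⟩ => hu t x y
  have hS : IsOpen {s : ℝ | c₃ * s + c₄ ≠ 0} := isOpen_ne_fun (by fun_prop) continuous_const
  have hT : IsOpen {t | t ∈ I ∧ c₃ * ζ t + c₄ ≠ 0} :=
    (continuousOn_const.mul hζ.continuousOn |>.add continuousOn_const).isOpen_inter_preimage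
      hIopen isOpen_ne
  rw [hu']
  exact isDNSolOn_nyzhnykAnsatz hT hS (hρ.mono fun _ ht => ht.1) (fun t ht => hρ0 t ht.1)
    (hζ.mono fun _ ht => ht.1) (fun t ht => hζ' t ht.1) (fun _ ht => ht.2)
    (isRedSolOn_redTransform ⟨hw.contDiffOn, fun p _ => hweq p⟩)

/-- Extension of the invariant solutions of the dispersionless Nyzhnyk
equation by hidden symmetries, for nonconstant `ρ` (with `ρ` and `ρ'` nowhere zero). -/
theorem statement4 (I : Set ℝ) (hIopen : IsOpen I) (hIint : I.OrdConnected)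
    (ρ ζ : ℝ → ℝ) (hρ : ContDiffOn ℝ (⊤ : ℕ∞) ρ I) (hρ0 : ∀ t ∈ I, ρ t ≠ 0)
    (hρ'0 : ∀ t ∈ I, deriv ρ t ≠ 0)
    (hζ : ContDiffOn ℝ (⊤ : ℕ∞) ζ I)
    (hζ' : ∀ t ∈ I, deriv ζ t = 2 * (ρ t ^ 3 - 1) / ρ t ^ 3)
    (w : ℝ × ℝ → ℝ) (hw : ContDiff ℝ (⊤ : ℕ∞) w)
    (hweq : ∀ p, d1 (d2 (d2 w)) p + d2 (d2 w) p * d2 (d2 (d2 w)) p = 0)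
    (c₁ c₂ c₃ c₄ c₅ : ℝ)
    (hΔ : c₁ * c₄ - c₂ * c₃ = 1 ∨ c₁ * c₄ - c₂ * c₃ = -1)
    (u : ℝ × ℝ × ℝ → ℝ)
    (hu : ∀ t x y, u (t, x, y) =
      (c₁ * c₄ - c₂ * c₃) * (c₃ * ζ t + c₄) *
          w ((c₁ * ζ t + c₂) / (c₃ * ζ t + c₄),
            ((y / ρ t - x) + c₅ * ζ t) / (c₃ * ζ t + c₄))
        + c₃ * (y / ρ t - x) ^ 3 / (6 * (c₃ * ζ t + c₄))
        - c₄ * c₅ * (y / ρ t - x) ^ 2 / (2 * (c₃ * ζ t + c₄))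
        - deriv ρ t / (6 * ρ t) * y ^ 3) :
    IsDNSolOn u {p : ℝ × ℝ × ℝ | p.1 ∈ I ∧ c₃ * ζ p.1 + c₄ ≠ 0} :=
  statement4_general I hIopen ρ ζ hρ hρ0 hζ hζ' w hw hweq c₁ c₂ c₃ c₄ c₅ u hu
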